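/- There exist W₀ and constants c > 0 and K, independent of W, such that for all W ≥ W₀, all cubes Λ of side W in ℤ³, all E ∈ 𝓘, and all j ∈ Λ, the diagonal entries of B satisfy Re B_{jj} ≥ c/W² and |Im B_{jj}| ≤ K/W³. -/

import Mathlib

open scoped BigOperators Topology
open Matrix MeasureTheory Filter

noncomputable section

/-- The discrete torus of side lengths `L i`; when each `L i` is a positive multiple of `W`,
this is a union of cubes of side `W` (containing `0`) with periodic boundary conditions. -/
abbrev Torus (L : Fin 3 → ℕ) := (i : Fin 3) → ZMod (L i)

/-- Unit lattice vector in direction `i`. -/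
def unitVec (L : Fin 3 → ℕ) (i : Fin 3) : Torus L := fun j => if j = i then 1 else 0

/-- Discrete Laplacian with periodic boundary conditions. -/
def lap (L : Fin 3 → ℕ) : Matrix (Torus L) (Torus L) ℝ :=
  Matrix.of fun x y =>
    (∑ i : Fin 3, ((if y = x + unitVec L i then (1 : ℝ) else 0) +
        (if y = x - unitVec L i then (1 : ℝ) else 0))) - (if y = x then 6 else 0)

/-- Distance to `0` in `ℤ/n`, via the minimal representative. -/
def zdist {n : ℕ} (x : ZMod n) : ℕ := min x.val (n - x.val)

/-- Euclidean distance on the torus. -/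
def tdist (L : Fin 3 → ℕ) (x y : Torus L) : ℝ :=
  Real.sqrt (∑ i : Fin 3, ((zdist (x i - y i) : ℝ)) ^ 2)

/-- The band covariance profile `J = (-W²Δ + 1)⁻¹`. -/
def Jmat (L : Fin 3 → ℕ) [∀ i, NeZero (L i)] (W : ℕ) : Matrix (Torus L) (Torus L) ℝ :=
  (((W : ℝ) ^ 2) • (-lap L) + 1)⁻¹

def mr2 (E : ℝ) : ℝ := 2 * (1 - E ^ 2 / 4)
def mi2 (E : ℝ) : ℝ := E * Real.sqrt (1 - E ^ 2 / 4)
def mr (E : ℝ) : ℝ := Real.sqrt (mr2 E)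

/-- `ℰ = E/2 - i√(1 - E²/4)`. -/
def calE (E : ℝ) : ℂ := ((E / 2 : ℝ) : ℂ) - (Real.sqrt (1 - E ^ 2 / 4) : ℝ) * Complex.I
/-- `ℰ̄ = E - ℰ = E/2 + i√(1 - E²/4)`, the complex conjugate of `ℰ`. -/
def calEbar (E : ℝ) : ℂ := ((E / 2 : ℝ) : ℂ) + (Real.sqrt (1 - E ^ 2 / 4) : ℝ) * Complex.I

/-- `C = (-W²Δ + m_r²)⁻¹`. -/
def Cmat (L : Fin 3 → ℕ) [∀ i, NeZero (L i)] (W : ℕ) (E : ℝ) : Matrix (Torus L) (Torus L) ℝ :=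
  (((W : ℝ) ^ 2) • (-lap L) + mr2 E • 1)⁻¹

/-- `B = (C⁻¹ + i m_i²·Id)⁻¹`. -/
def Bmat (L : Fin 3 → ℕ) [∀ i, NeZero (L i)] (W : ℕ) (E : ℝ) : Matrix (Torus L) (Torus L) ℂ :=
  (((Cmat L W E)⁻¹).map Complex.ofReal + (mi2 E * Complex.I) • 1)⁻¹

/-- The energy window `𝓘 = {E : η ≤ |E| ≤ 1.8}`. -/
def specI (η : ℝ) : Set ℝ := {E : ℝ | η ≤ |E| ∧ |E| ≤ 1.8}

/-- Wigner semicircle density `(1/π)√(1 - E²/4)`. -/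
def rhoSC (E : ℝ) : ℝ := Real.sqrt (1 - E ^ 2 / 4) / Real.pi

/-- Real quadratic form `aᵀ M a`. -/
def qf (L : Fin 3 → ℕ) [∀ i, NeZero (L i)] (M : Matrix (Torus L) (Torus L) ℝ)
    (a : Torus L → ℝ) : ℝ := a ⬝ᵥ M.mulVec a

/-! The characters `χ_k(x) = ∏ᵢ exp(2πi kᵢxᵢ/W)` of `(ℤ/W)³` diagonalise the periodic Laplacian,
with `-Δ χ_k = λ_k χ_k`, `λ_k = ∑ᵢ 2(1 - cos(2πkᵢ/W))`. Hence `C⁻¹ + i m_i²` has the eigenvalues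
`μ_k + i m_i²` with `μ_k = W²λ_k + m_r²`, and Fourier inversion gives
`B_jj = W⁻³ ∑_k (μ_k + i m_i²)⁻¹` for every `j`.

On `𝓘` we have `1/3 ≤ μ_k ≤ 14W²` and `|m_i²| ≤ 1`, so every summand has real part at least
`1/(140W²)`, which gives the bound on `Re B_jj`. The imaginary parts are at most `μ_k⁻²`. Writing
`nᵢ` for the representative of `kᵢ` in `(-W/2, W/2]`, Jordan's inequality `1 - cos x ≥ 2x²/π²`
gives `μ_k ≥ (1 + |n|²)/3`, so `∑_k μ_k⁻²` is bounded independently of `W` by the convergent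
lattice sum `9 ∑_{n ∈ ℤ³} (1 + |n|²)⁻²`. -/

open ZMod

namespace Matrix

variable {𝕜 n κ : Type*} [Field 𝕜] [Fintype n] [DecidableEq n] [Fintype κ]
  {M : Matrix n n 𝕜} {v w : κ → n → 𝕜} {μ : κ → 𝕜} {N : 𝕜}

theorem mul_eq_one_of_mulVec_eq_smul (hM : ∀ k, M *ᵥ v k = μ k • v k) (hμ : ∀ k, μ k ≠ 0)
    (hN : N ≠ 0) (hvw : ∀ x y, ∑ k, v k x * w k y = if x = y then N else 0) :
    M * of (fun x y => N⁻¹ * ∑ k, v k x * w k y / μ k) = 1 := by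
  ext x y
  have hrow : ∀ k, ∑ u, M x u * v k u = μ k * v k x := fun k => congrFun (hM k) x
  calc (M * of fun x y => N⁻¹ * ∑ k, v k x * w k y / μ k) x y
      = N⁻¹ * ∑ k, (∑ u, M x u * v k u) * w k y / μ k := by
        simp only [mul_apply, of_apply, Finset.mul_sum, Finset.sum_mul, Finset.sum_div]
        rw [Finset.sum_comm]
        refine Finset.sum_congr rfl fun k _ => Finset.sum_congr rfl fun u _ => ?_
        ring
    _ = N⁻¹ * ∑ k, v k x * w k y := by
        simp only [hrow]
        congr 1
        refine Finset.sum_congr rfl fun k _ => ?_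
        field_simp [hμ k]
    _ = (1 : Matrix n n 𝕜) x y := by
        rw [hvw, one_apply]
        split_ifs <;> simp [hN]

theorem inv_eq_of_mulVec_eq_smul (hM : ∀ k, M *ᵥ v k = μ k • v k) (hμ : ∀ k, μ k ≠ 0)
    (hN : N ≠ 0) (hvw : ∀ x y, ∑ k, v k x * w k y = if x = y then N else 0) :
    M⁻¹ = of (fun x y => N⁻¹ * ∑ k, v k x * w k y / μ k) :=
  inv_eq_right_inv (mul_eq_one_of_mulVec_eq_smul hM hμ hN hvw)

theorem isUnit_det_of_mulVec_eq_smul (hM : ∀ k, M *ᵥ v k = μ k • v k) (hμ : ∀ k, μ k ≠ 0)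
    (hN : N ≠ 0) (hvw : ∀ x y, ∑ k, v k x * w k y = if x = y then N else 0) :
    IsUnit M.det :=
  isUnit_det_of_right_inverse (mul_eq_one_of_mulVec_eq_smul hM hμ hN hvw)

end Matrix

section TorusCharacters

variable {ι : Type*} [Fintype ι] {W : ℕ} [NeZero W]

def torusChar (k x : ι → ZMod W) : ℂ := ∏ i, stdAddChar (k i * x i)

theorem torusChar_add (k x y : ι → ZMod W) :
    torusChar k (x + y) = torusChar k x * torusChar k y := by
  simp only [torusChar, Pi.add_apply, mul_add, AddChar.map_add_eq_mul, Finset.prod_mul_distrib]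

theorem torusChar_zero_right (k : ι → ZMod W) : torusChar k 0 = 1 := by
  simp [torusChar]

theorem torusChar_mul_torusChar_neg (k x y : ι → ZMod W) :
    torusChar k x * torusChar k (-y) = torusChar k (x - y) := by
  rw [sub_eq_add_neg, torusChar_add]

theorem torusChar_single [DecidableEq ι] (k : ι → ZMod W) (i : ι) (u : ZMod W) :
    torusChar k (Pi.single i u) = stdAddChar (k i * u) := by
  rw [torusChar, Finset.prod_eq_single i (fun j _ hj => by simp [hj]) (by simp)]
  simp

theorem sum_torusChar [DecidableEq ι] (z : ι → ZMod W) :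
    ∑ k : ι → ZMod W, torusChar k z = if z = 0 then (W : ℂ) ^ Fintype.card ι else 0 := by
  simp only [torusChar]
  rw [← Fintype.prod_sum fun i (u : ZMod W) => stdAddChar (u * z i)]
  simp only [AddChar.sum_mulShift _ (isPrimitive_stdAddChar W), ZMod.card]
  by_cases hz : z = 0
  · simp [hz]
  · obtain ⟨i, hi⟩ : ∃ i, z i ≠ 0 := Function.ne_iff.mp hz
    rw [if_neg hz]
    exact Finset.prod_eq_zero (Finset.mem_univ i) (by simp [hi])

theorem sum_torusChar_mul_torusChar_neg [DecidableEq ι] (x y : ι → ZMod W) :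
    ∑ k, torusChar k x * torusChar k (-y) = if x = y then (W : ℂ) ^ Fintype.card ι else 0 := by
  simp only [torusChar_mul_torusChar_neg, sum_torusChar, sub_eq_zero]

end TorusCharacters

section LapSymbol

variable {ι : Type*} [Fintype ι] {W : ℕ}

def lapSymbol (W : ℕ) (k : ι → ZMod W) : ℝ :=
  ∑ i, 2 * (1 - Real.cos (2 * Real.pi * (k i).valMinAbs / W))

theorem lapSymbol_nonneg (k : ι → ZMod W) : 0 ≤ lapSymbol W k :=
  Finset.sum_nonneg fun i _ => by nlinarith [Real.cos_le_one (2 * Real.pi * (k i).valMinAbs / W)]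

theorem lapSymbol_le (k : ι → ZMod W) : lapSymbol W k ≤ 4 * Fintype.card ι := by
  calc lapSymbol W k ≤ ∑ _i : ι, (4 : ℝ) := Finset.sum_le_sum fun i _ => by
        nlinarith [Real.neg_one_le_cos (2 * Real.pi * (k i).valMinAbs / W)]
    _ = 4 * Fintype.card ι := by simp [mul_comm]

theorem sixteen_mul_sq_valMinAbs_le [NeZero W] (u : ZMod W) :
    16 * (u.valMinAbs : ℝ) ^ 2
      ≤ (W : ℝ) ^ 2 * (2 * (1 - Real.cos (2 * Real.pi * u.valMinAbs / W))) := by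
  have hW : (0 : ℝ) < W := Nat.cast_pos.mpr (NeZero.pos W)
  set x := 2 * Real.pi * u.valMinAbs / W with hx
  have hv : |(u.valMinAbs : ℝ)| * 2 ≤ W := by
    obtain ⟨h1, h2⟩ := valMinAbs_mem_Ioc u
    have h1' : -(W : ℝ) < u.valMinAbs * 2 := by exact_mod_cast h1
    have h2' : (u.valMinAbs : ℝ) * 2 ≤ W := by exact_mod_cast h2
    have := abs_le.mpr ⟨h1'.le, h2'⟩
    rwa [abs_mul, abs_two] at this
  have hxπ : |x| ≤ Real.pi := by
    rw [hx, abs_div, abs_mul, abs_of_pos Real.two_pi_pos, abs_of_pos hW, div_le_iff₀ hW]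
    nlinarith [Real.pi_pos]
  have hjordan := Real.cos_le_one_sub_mul_cos_sq hxπ
  calc 16 * (u.valMinAbs : ℝ) ^ 2 = (W : ℝ) ^ 2 * (2 * (2 / Real.pi ^ 2 * x ^ 2)) := by
        rw [hx]; field_simp; ring
    _ ≤ (W : ℝ) ^ 2 * (2 * (1 - Real.cos x)) := by gcongr; linarith

theorem stdAddChar_add_stdAddChar_neg [NeZero W] (u : ZMod W) :
    stdAddChar u + stdAddChar (-u) = 2 * Real.cos (2 * Real.pi * u.valMinAbs / W) := by
  rw [← coe_valMinAbs u, ← Int.cast_neg, stdAddChar_coe, stdAddChar_coe, coe_valMinAbs,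
    Complex.ofReal_cos, Complex.two_cos]
  push_cast
  congr 2 <;> ring

end LapSymbol

theorem lap_map_mulVec (L : Fin 3 → ℕ) [∀ i, NeZero (L i)] (f : Torus L → ℂ) (x : Torus L) :
    ((lap L).map ((↑) : ℝ → ℂ) *ᵥ f) x
      = ∑ i, (f (x + unitVec L i) + f (x - unitVec L i)) - 6 * f x := by
  simp only [mulVec, dotProduct, map_apply, lap, of_apply]
  push_cast [apply_ite ((↑) : ℝ → ℂ)]
  simp only [sub_mul, add_mul, Finset.sum_mul, ite_mul, one_mul, zero_mul, Finset.sum_sub_distrib,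
    Finset.sum_add_distrib, Finset.sum_ite_eq']
  rw [Finset.sum_comm, Finset.sum_comm (γ := Torus L)]
  simp

theorem unitVec_eq_single (W : ℕ) (i : Fin 3) : unitVec (fun _ => W) i = Pi.single i 1 := by
  funext j
  rw [unitVec, Pi.single_apply]

theorem lap_map_mulVec_torusChar {W : ℕ} [NeZero W] (k : Fin 3 → ZMod W) :
    (lap fun _ => W).map ((↑) : ℝ → ℂ) *ᵥ torusChar k = (-(lapSymbol W k : ℂ)) • torusChar k := by
  funext x
  have hneighbours : ∀ i, torusChar k (x + unitVec _ i) + torusChar k (x - unitVec _ i)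
      = torusChar k x * (2 * Real.cos (2 * Real.pi * (k i).valMinAbs / W)) := fun i => by
    rw [sub_eq_add_neg, torusChar_add, torusChar_add, unitVec_eq_single, ← Pi.single_neg,
      torusChar_single, torusChar_single, ← mul_add, mul_one, mul_neg_one,
      stdAddChar_add_stdAddChar_neg]
  rw [lap_map_mulVec, Finset.sum_congr rfl fun i _ => hneighbours i, Pi.smul_apply, smul_eq_mul,
    lapSymbol, ← Finset.mul_sum]
  push_cast
  simp only [Fin.sum_univ_three]
  ring

theorem one_third_le_mr2 {E : ℝ} (hE : |E| ≤ 1.8) : 1 / 3 ≤ mr2 E := by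
  have : E ^ 2 ≤ 1.8 ^ 2 := sq_le_sq' (abs_le.mp hE).1 (abs_le.mp hE).2
  unfold mr2
  nlinarith

theorem mr2_pos {E : ℝ} (hE : |E| ≤ 1.8) : 0 < mr2 E := by
  linarith [one_third_le_mr2 hE]

theorem mr2_le_two (E : ℝ) : mr2 E ≤ 2 := by
  unfold mr2
  nlinarith [sq_nonneg E]

theorem mi2_sq_le_one (E : ℝ) : mi2 E ^ 2 ≤ 1 := by
  rw [mi2, mul_pow]
  rcases le_total 0 (1 - E ^ 2 / 4) with h | h
  · rw [Real.sq_sqrt h]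
    nlinarith [sq_nonneg (E ^ 2 - 2)]
  · rw [Real.sqrt_eq_zero'.mpr h]
    norm_num

section Precision

variable {W : ℕ} {E : ℝ}

def precisionMatrix (W : ℕ) (E : ℝ) : Matrix (Fin 3 → ZMod W) (Fin 3 → ZMod W) ℝ :=
  (W : ℝ) ^ 2 • -lap (fun _ => W) + mr2 E • 1

def precisionSymbol (W : ℕ) (E : ℝ) (k : Fin 3 → ZMod W) : ℝ :=
  (W : ℝ) ^ 2 * lapSymbol W k + mr2 E

theorem mr2_le_precisionSymbol (k : Fin 3 → ZMod W) : mr2 E ≤ precisionSymbol W E k := by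
  have := lapSymbol_nonneg k
  unfold precisionSymbol
  nlinarith [sq_nonneg (W : ℝ)]

variable [NeZero W]

theorem precisionSymbol_le (k : Fin 3 → ZMod W) : precisionSymbol W E k ≤ 14 * (W : ℝ) ^ 2 := by
  have hW : (1 : ℝ) ≤ W := Nat.one_le_cast.mpr NeZero.one_le
  have := lapSymbol_le (W := W) k
  norm_num at this
  unfold precisionSymbol
  nlinarith [mr2_le_two E, mul_le_mul_of_nonneg_left this (sq_nonneg (W : ℝ))]

theorem one_add_sum_sq_le_precisionSymbol (hE : |E| ≤ 1.8) (k : Fin 3 → ZMod W) :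
    (1 + ∑ i, ((k i).valMinAbs : ℝ) ^ 2) / 3 ≤ precisionSymbol W E k := by
  have hcoord : 16 * ∑ i, ((k i).valMinAbs : ℝ) ^ 2 ≤ (W : ℝ) ^ 2 * lapSymbol W k := by
    rw [Finset.mul_sum, lapSymbol, Finset.mul_sum]
    exact Finset.sum_le_sum fun i _ => sixteen_mul_sq_valMinAbs_le (k i)
  have hsq : 0 ≤ ∑ i, ((k i).valMinAbs : ℝ) ^ 2 := Finset.sum_nonneg fun i _ => sq_nonneg _
  unfold precisionSymbol
  linarith [one_third_le_mr2 hE]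

theorem precisionMatrix_map_add_smul_mulVec_torusChar (z : ℂ) (k : Fin 3 → ZMod W) :
    ((precisionMatrix W E).map ((↑) : ℝ → ℂ) + z • 1) *ᵥ torusChar k
      = ((precisionSymbol W E k : ℂ) + z) • torusChar k := by
  have hmap : (precisionMatrix W E).map ((↑) : ℝ → ℂ)
      = -((W : ℂ) ^ 2 • (lap fun _ => W).map ((↑) : ℝ → ℂ)) + (mr2 E : ℂ) • 1 := by
    ext x y
    simp [precisionMatrix, one_apply, apply_ite ((↑) : ℝ → ℂ)]
  simp only [hmap, add_mulVec, neg_mulVec, smul_mulVec, one_mulVec, lap_map_mulVec_torusChar,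
    precisionSymbol]
  push_cast
  module

theorem inv_precisionMatrix_map_add_smul (z : ℂ)
    (hz : ∀ k, (precisionSymbol W E k : ℂ) + z ≠ 0) :
    ((precisionMatrix W E).map ((↑) : ℝ → ℂ) + z • 1)⁻¹
      = of fun x y => ((W : ℂ) ^ 3)⁻¹ *
          ∑ k, torusChar k x * torusChar k (-y) / ((precisionSymbol W E k : ℂ) + z) :=
  inv_eq_of_mulVec_eq_smul (precisionMatrix_map_add_smul_mulVec_torusChar z) hz
    (pow_ne_zero 3 (Nat.cast_ne_zero.mpr (NeZero.ne W)))
    fun x y => by rw [sum_torusChar_mul_torusChar_neg, Fintype.card_fin]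

theorem inv_Cmat (hE : 0 < mr2 E) : (Cmat (fun _ => W) W E)⁻¹ = precisionMatrix W E := by
  have hz : ∀ k, (precisionSymbol W E k : ℂ) + 0 ≠ 0 := fun k => by
    rw [add_zero, Complex.ofReal_ne_zero]
    exact (hE.trans_le (mr2_le_precisionSymbol k)).ne'
  have hmap : IsUnit ((precisionMatrix W E).map ((↑) : ℝ → ℂ) + (0 : ℂ) • 1).det :=
    isUnit_det_of_mulVec_eq_smul (precisionMatrix_map_add_smul_mulVec_torusChar 0) hz
      (pow_ne_zero 3 (Nat.cast_ne_zero.mpr (NeZero.ne W)))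
      fun x y => by rw [sum_torusChar_mul_torusChar_neg, Fintype.card_fin]
  have hdet : ((precisionMatrix W E).map ((↑) : ℝ → ℂ)).det = ((precisionMatrix W E).det : ℂ) :=
    (Complex.ofRealHom.map_det _).symm
  rw [zero_smul, add_zero, hdet, isUnit_iff_ne_zero, Complex.ofReal_ne_zero] at hmap
  exact nonsing_inv_nonsing_inv _ (isUnit_iff_ne_zero.mpr hmap)

theorem Bmat_apply_self (hE : 0 < mr2 E) (j : Fin 3 → ZMod W) :
    Bmat (fun _ => W) W E j j
      = ((W : ℂ) ^ 3)⁻¹ * ∑ k, ((precisionSymbol W E k : ℂ) + mi2 E * Complex.I)⁻¹ := by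
  have hz : ∀ k, (precisionSymbol W E k : ℂ) + mi2 E * Complex.I ≠ 0 := fun k h => by
    have hre := congrArg Complex.re h
    simp only [Complex.add_re, Complex.ofReal_re, Complex.mul_re, Complex.ofReal_im,
      Complex.I_re, Complex.I_im, Complex.zero_re] at hre
    linarith [mr2_le_precisionSymbol (E := E) k]
  rw [Bmat, inv_Cmat hE, inv_precisionMatrix_map_add_smul _ hz, of_apply]
  simp [torusChar_mul_torusChar_neg, torusChar_zero_right, div_eq_mul_inv]

end Precision

/-- By AM-GM a product of three of these weights dominates `(1 + |n|²)⁻²` on `ℤ³`, and each is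
summable on `ℤ` because `2 · 2/3 > 1`. -/
def latticeWeight (n : ℤ) : ℝ := (1 + (n : ℝ) ^ 2) ^ (-(2 / 3 : ℝ))

theorem latticeWeight_nonneg (n : ℤ) : 0 ≤ latticeWeight n := by
  unfold latticeWeight
  positivity

theorem summable_latticeWeight : Summable latticeWeight := by
  refine (Real.summable_abs_int_rpow (b := 4 / 3) (by norm_num)).of_norm_bounded_eventually ?_
  filter_upwards [Filter.eventually_cofinite_ne 0] with n hn
  have hn' : (0 : ℝ) < |(n : ℝ)| := abs_pos.mpr (Int.cast_ne_zero.mpr hn)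
  rw [Real.norm_of_nonneg (latticeWeight_nonneg n), latticeWeight,
    show -(4 / 3 : ℝ) = 2 * -(2 / 3) by norm_num, Real.rpow_mul hn'.le, Real.rpow_two, sq_abs]
  exact Real.rpow_le_rpow_of_nonpos (by positivity) (by linarith) (by norm_num)

theorem tsum_latticeWeight_pos : 0 < ∑' n, latticeWeight n := by
  refine summable_latticeWeight.tsum_pos latticeWeight_nonneg 0 ?_
  norm_num [latticeWeight]

theorem sum_latticeWeight_valMinAbs_le (W : ℕ) [NeZero W] :
    ∑ u : ZMod W, latticeWeight u.valMinAbs ≤ ∑' n, latticeWeight n := by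
  rw [← tsum_fintype (L := SummationFilter.unconditional _)]
  exact tsum_comp_le_tsum_of_inj summable_latticeWeight latticeWeight_nonneg
    fun u v h => valMinAbs_inj.mp h

theorem inv_sq_one_add_sum_le_prod_rpow {ι : Type*} [Fintype ι] [Nonempty ι] (a : ι → ℝ)
    (ha : ∀ i, 0 ≤ a i) :
    ((1 + ∑ i, a i) ^ 2)⁻¹ ≤ ∏ i, (1 + a i) ^ (-(2 / Fintype.card ι : ℝ)) := by
  set n := Fintype.card ι
  have hn : (n : ℝ) ≠ 0 := Nat.cast_ne_zero.mpr Fintype.card_ne_zero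
  have hs : 0 ≤ ∑ i, a i := Finset.sum_nonneg fun i _ => ha i
  have hpos : 0 < ∏ i, (1 + a i) := Finset.prod_pos fun i _ => by linarith [ha i]
  have hprod : ∏ i, (1 + a i) ≤ (1 + ∑ i, a i) ^ n := calc
    _ ≤ ∏ _i : ι, (1 + ∑ i, a i) := Finset.prod_le_prod (fun i _ => by linarith [ha i])
        fun i _ => by linarith [Finset.single_le_sum (fun j _ => ha j) (Finset.mem_univ i)]
    _ = _ := by rw [Finset.prod_const, Finset.card_univ]
  rw [Real.finsetProd_rpow _ _ (fun i _ => by linarith [ha i]), Real.rpow_neg hpos.le]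
  refine inv_anti₀ (by positivity) ?_
  calc (∏ i, (1 + a i)) ^ (2 / n : ℝ) ≤ ((1 + ∑ i, a i) ^ n) ^ (2 / n : ℝ) := by gcongr
    _ = (1 + ∑ i, a i) ^ 2 := by
        rw [← Real.rpow_natCast, ← Real.rpow_mul (by linarith), mul_div_cancel₀ _ hn]
        norm_cast

theorem Complex.re_inv_ofReal_add_mul_I (μ b : ℝ) :
    ((μ : ℂ) + b * Complex.I)⁻¹.re = μ / (μ ^ 2 + b ^ 2) := by
  rw [Complex.inv_re, Complex.normSq_add_mul_I]
  simp

theorem Complex.im_inv_ofReal_add_mul_I (μ b : ℝ) :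
    ((μ : ℂ) + b * Complex.I)⁻¹.im = -b / (μ ^ 2 + b ^ 2) := by
  rw [Complex.inv_im, Complex.normSq_add_mul_I]
  simp

section DiagonalBounds

variable {W : ℕ} [NeZero W] {E : ℝ}

theorem sum_inv_precisionSymbol_sq_le (hE : |E| ≤ 1.8) :
    ∑ k, (precisionSymbol W E k ^ 2)⁻¹ ≤ 9 * (∑' n, latticeWeight n) ^ 3 := by
  have hterm : ∀ k, (precisionSymbol W E k ^ 2)⁻¹ ≤ 9 * ∏ i, latticeWeight (k i).valMinAbs :=
    fun k => by
    set s := ∑ i, ((k i).valMinAbs : ℝ) ^ 2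
    have hs : 0 ≤ s := Finset.sum_nonneg fun i _ => sq_nonneg _
    have hprod := inv_sq_one_add_sum_le_prod_rpow (fun i => ((k i).valMinAbs : ℝ) ^ 2)
      fun i => sq_nonneg _
    rw [Fintype.card_fin] at hprod
    calc (precisionSymbol W E k ^ 2)⁻¹ ≤ (((1 + s) / 3) ^ 2)⁻¹ := by
          gcongr
          exact one_add_sum_sq_le_precisionSymbol hE k
      _ = 9 * ((1 + s) ^ 2)⁻¹ := by rw [div_pow, inv_div]; ring
      _ ≤ 9 * ∏ i, latticeWeight (k i).valMinAbs := by
          gcongr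
          simpa [latticeWeight] using hprod
  calc ∑ k, (precisionSymbol W E k ^ 2)⁻¹
      ≤ ∑ k : Fin 3 → ZMod W, 9 * ∏ i, latticeWeight (k i).valMinAbs :=
        Finset.sum_le_sum fun k _ => hterm k
    _ = 9 * (∑ u : ZMod W, latticeWeight u.valMinAbs) ^ 3 := by
        rw [← Finset.mul_sum, ← Fintype.prod_sum fun _ (u : ZMod W) => latticeWeight u.valMinAbs,
          Finset.prod_const, Finset.card_univ, Fintype.card_fin]
    _ ≤ 9 * (∑' n, latticeWeight n) ^ 3 := by
        gcongr
        · exact Finset.sum_nonneg fun u _ => latticeWeight_nonneg _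
        · exact sum_latticeWeight_valMinAbs_le W

theorem re_Bmat_apply_self_ge (hE : |E| ≤ 1.8) (j : Fin 3 → ZMod W) :
    1 / 140 / (W : ℝ) ^ 2 ≤ (Bmat (fun _ => W) W E j j).re := by
  have hW : (0 : ℝ) < W := Nat.cast_pos.mpr (NeZero.pos W)
  have hterm : ∀ k,
      (140 * (W : ℝ) ^ 2)⁻¹ ≤ ((precisionSymbol W E k : ℂ) + mi2 E * Complex.I)⁻¹.re := fun k => by
    have hμ := (one_third_le_mr2 hE).trans (mr2_le_precisionSymbol k)
    have hμW := precisionSymbol_le (E := E) k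
    have hb := mi2_sq_le_one E
    rw [Complex.re_inv_ofReal_add_mul_I, inv_eq_one_div,
      div_le_div_iff₀ (by positivity) (by positivity)]
    nlinarith
  rw [Bmat_apply_self (mr2_pos hE),
    ← Complex.ofReal_natCast, ← Complex.ofReal_pow, ← Complex.ofReal_inv, Complex.re_ofReal_mul,
    Complex.re_sum]
  calc 1 / 140 / (W : ℝ) ^ 2
      = ((W : ℝ) ^ 3)⁻¹ * ∑ _k : Fin 3 → ZMod W, (140 * (W : ℝ) ^ 2)⁻¹ := by
        simp only [Finset.sum_const, Finset.card_univ, Fintype.card_fun, ZMod.card,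
          Fintype.card_fin, nsmul_eq_mul]
        push_cast
        field_simp
    _ ≤ _ := by gcongr with k; exact hterm k

theorem abs_im_Bmat_apply_self_le (hE : |E| ≤ 1.8) (j : Fin 3 → ZMod W) :
    |(Bmat (fun _ => W) W E j j).im| ≤ 9 * (∑' n, latticeWeight n) ^ 3 / (W : ℝ) ^ 3 := by
  have hW : (0 : ℝ) < W := Nat.cast_pos.mpr (NeZero.pos W)
  have hterm : ∀ k, |((precisionSymbol W E k : ℂ) + mi2 E * Complex.I)⁻¹.im|
      ≤ (precisionSymbol W E k ^ 2)⁻¹ := fun k => by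
    have hμ : 0 < precisionSymbol W E k := by
      linarith [one_third_le_mr2 hE, mr2_le_precisionSymbol (E := E) k]
    have hb : |mi2 E| ≤ 1 := (sq_le_one_iff_abs_le_one _).mp (mi2_sq_le_one E)
    rw [Complex.im_inv_ofReal_add_mul_I, abs_div, abs_neg,
      abs_of_pos (by positivity : 0 < precisionSymbol W E k ^ 2 + mi2 E ^ 2),
      inv_eq_one_div, div_le_div_iff₀ (by positivity) (by positivity)]
    nlinarith [sq_nonneg (mi2 E), abs_nonneg (mi2 E)]
  rw [Bmat_apply_self (mr2_pos hE),
    ← Complex.ofReal_natCast, ← Complex.ofReal_pow, ← Complex.ofReal_inv, Complex.im_ofReal_mul,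
    Complex.im_sum, abs_mul, abs_of_pos (by positivity), div_eq_inv_mul]
  gcongr
  exact (Finset.abs_sum_le_sum_abs _ _).trans ((Finset.sum_le_sum fun k _ => hterm k).trans
    (sum_inv_precisionSymbol_sq_le hE))

end DiagonalBounds

theorem Bdiag_estimates_general (η : ℝ) :
    ∃ (W₀ : ℕ) (c K : ℝ), 0 < c ∧ 0 < K ∧
      ∀ (W : ℕ), W₀ ≤ W →
      ∀ (L : Fin 3 → ℕ) [∀ i, NeZero (L i)], (∀ i, L i = W) →
      ∀ E ∈ specI η,
      ∀ j : Torus L,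
        c / (W : ℝ) ^ 2 ≤ (Bmat L W E j j).re ∧
        |(Bmat L W E j j).im| ≤ K / (W : ℝ) ^ 3 := by
  refine ⟨0, 1 / 140, 9 * (∑' n, latticeWeight n) ^ 3, by norm_num,
    by have := tsum_latticeWeight_pos; positivity, ?_⟩
  rintro W - L hL0 hL E ⟨-, hE⟩ j
  obtain rfl : L = fun _ => W := funext hL
  have : NeZero W := hL0 0
  exact ⟨re_Bmat_apply_self_ge hE j, abs_im_Bmat_apply_self_le hE j⟩

/-- Diagonal estimates for `B`: `Re B_{jj} ≥ c/W²` and `|Im B_{jj}| ≤ K/W³`. -/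
theorem Bdiag_estimates (η : ℝ) (hη : 0 < η) :
    ∃ (W₀ : ℕ) (c K : ℝ), 0 < c ∧ 0 < K ∧
      ∀ (W : ℕ), W₀ ≤ W →
      ∀ (L : Fin 3 → ℕ) [∀ i, NeZero (L i)], (∀ i, L i = W) →
      ∀ E ∈ specI η,
      ∀ j : Torus L,
        c / (W : ℝ) ^ 2 ≤ (Bmat L W E j j).re ∧
        |(Bmat L W E j j).im| ≤ K / (W : ℝ) ^ 3 :=
  Bdiag_estimates_general η
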